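/- In the monotone communication matrix of MAJ3, any exact partition of the 9 cells into monochromatic combinatorial rectangles has at least 5 rectangles. Combined with the size-5 formula (x1∧x2)∨((x1∨x2)∧x3), the monotone formula size of MAJ3 is exactly 5. -/

import Mathlib

/-- The 3-bit majority function on vectors. -/
def MAJ3v (x : Fin 3 → Bool) : Bool :=
  decide (2 ≤ (Finset.univ.filter fun i => x i = true).card)

def IsMinterm {n : ℕ} (f : (Fin n → Bool) → Bool) (x : Fin n → Bool) : Prop :=
  f x = true ∧ ∀ y, y ≤ x → y ≠ x → f y = false

def IsMaxterm {n : ℕ} (f : (Fin n → Bool) → Bool) (y : Fin n → Bool) : Prop :=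
  f y = false ∧ ∀ z, y ≤ z → z ≠ y → f z = true

/-- The cell of the monotone communication matrix at `(x, y)`. -/
def cell {n : ℕ} (x y : Fin n → Bool) : Finset (Fin n) :=
  Finset.univ.filter fun i => x i = true ∧ y i = false

/-- Monotone Boolean formulas over `n` variables. -/
inductive MFormula (n : ℕ) : Type
  | var : Fin n → MFormula n
  | and : MFormula n → MFormula n → MFormula n
  | or  : MFormula n → MFormula n → MFormula n

def MFormula.size {n : ℕ} : MFormula n → ℕ
  | .var _ => 1
  | .and φ ψ => φ.size + ψ.size
  | .or φ ψ => φ.size + ψ.size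

def MFormula.eval {n : ℕ} (x : Fin n → Bool) : MFormula n → Bool
  | .var i => x i
  | .and φ ψ => φ.eval x && ψ.eval x
  | .or φ ψ => φ.eval x || ψ.eval x

structure TT where
  (b0 b1 b2 b3 b4 b5 b6 b7 : Bool)
deriving DecidableEq

def enc (f : (Fin 3 → Bool) → Bool) : TT :=
  ⟨f ![false,false,false], f ![true,false,false], f ![false,true,false], f ![true,true,false],
   f ![false,false,true], f ![true,false,true], f ![false,true,true], f ![true,true,true]⟩
def tand (a b : TT) : TT :=
  ⟨a.b0 && b.b0, a.b1 && b.b1, a.b2 && b.b2, a.b3 && b.b3, a.b4 && b.b4, a.b5 && b.b5,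
   a.b6 && b.b6, a.b7 && b.b7⟩
def tor (a b : TT) : TT :=
  ⟨a.b0 || b.b0, a.b1 || b.b1, a.b2 || b.b2, a.b3 || b.b3, a.b4 || b.b4, a.b5 || b.b5,
   a.b6 || b.b6, a.b7 || b.b7⟩

example (f g : (Fin 3 → Bool) → Bool) : enc (fun x => f x && g x) = tand (enc f) (enc g) := rfl
example (f g : (Fin 3 → Bool) → Bool) : enc (fun x => f x || g x) = tor (enc f) (enc g) := rfl


def combos (A B : Finset TT) : Finset TT :=
  ((A ×ˢ B).image fun p => tand p.1 p.2) ∪ ((A ×ˢ B).image fun p => tor p.1 p.2)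

def R1 : Finset TT := {enc (fun x => x 0), enc (fun x => x 1), enc (fun x => x 2)}
def R2 : Finset TT := R1 ∪ combos R1 R1
def R3 : Finset TT := R2 ∪ combos R1 R2 ∪ combos R2 R1
def R4 : Finset TT := R3 ∪ combos R1 R3 ∪ combos R3 R1 ∪ combos R2 R2

def RR : ℕ → Finset TT
  | 0 => ∅
  | 1 => R1
  | 2 => R2
  | 3 => R3
  | _ => R4

lemma size_pos {n : ℕ} (φ : MFormula n) : 1 ≤ φ.size := by
  induction φ with
  | var i => simp [MFormula.size]
  | and φ ψ ihφ ihψ => simp [MFormula.size]; omega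
  | or φ ψ ihφ ihψ => simp [MFormula.size]; omega

set_option maxRecDepth 40000 in
lemma combo_mem : ∀ a b : Fin 5, 1 ≤ (a:ℕ) → 1 ≤ (b:ℕ) → (a:ℕ) + (b:ℕ) ≤ 4 →
    ∀ x ∈ RR a, ∀ y ∈ RR b, tand x y ∈ RR ((a:ℕ) + (b:ℕ)) ∧ tor x y ∈ RR ((a:ℕ) + (b:ℕ)) := by
  decide

set_option maxRecDepth 40000 in
lemma RR_le : ∀ a : Fin 5, RR a ⊆ RR 4 := by decide

lemma mem_RR (φ : MFormula 3) (h4 : φ.size ≤ 4) : enc (fun x => φ.eval x) ∈ RR φ.size := by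
  induction φ with
  | var i =>
    have : enc (fun x => (MFormula.var i).eval x) = enc (fun x => x i) := rfl
    rw [show (MFormula.var i).size = 1 from rfl, this]
    fin_cases i <;> decide
  | and φ ψ ihφ ihψ =>
    have h1 := size_pos φ; have h2 := size_pos ψ
    have hs : MFormula.size (.and φ ψ) = φ.size + ψ.size := rfl
    rw [hs] at h4 ⊢
    have hφ := ihφ (by omega); have hψ := ihψ (by omega)
    have he : enc (fun x => (MFormula.and φ ψ).eval x)
        = tand (enc (fun x => φ.eval x)) (enc (fun x => ψ.eval x)) := rfl
    rw [he]
    have := (combo_mem ⟨φ.size, by omega⟩ ⟨ψ.size, by omega⟩ h1 h2 h4 _ hφ _ hψ).1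
    simpa using this
  | or φ ψ ihφ ihψ =>
    have h1 := size_pos φ; have h2 := size_pos ψ
    have hs : MFormula.size (.or φ ψ) = φ.size + ψ.size := rfl
    rw [hs] at h4 ⊢
    have hφ := ihφ (by omega); have hψ := ihψ (by omega)
    have he : enc (fun x => (MFormula.or φ ψ).eval x)
        = tor (enc (fun x => φ.eval x)) (enc (fun x => ψ.eval x)) := rfl
    rw [he]
    have := (combo_mem ⟨φ.size, by omega⟩ ⟨ψ.size, by omega⟩ h1 h2 h4 _ hφ _ hψ).2
    simpa using this

set_option maxRecDepth 40000 in
lemma maj_not_R4 : enc MAJ3v ∉ RR 4 := by decide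


def mnt (k : Fin 3) : Fin 3 → Bool := fun i => !decide (i = k)
def mxt (k : Fin 3) : Fin 3 → Bool := fun i => decide (i = k)

lemma minterm_mnt (k : Fin 3) : IsMinterm MAJ3v (mnt k) := by
  unfold IsMinterm; simp only [Pi.le_def]; revert k; decide

lemma maxterm_mxt (k : Fin 3) : IsMaxterm MAJ3v (mxt k) := by
  unfold IsMaxterm; simp only [Pi.le_def]; revert k; decide

lemma cell_mem : ∀ (i k l : Fin 3), i ∈ cell (mnt k) (mxt l) ↔ (i ≠ k ∧ i ≠ l) := by decide

lemma rect_small : ∀ i i' : Fin 3, ∀ K L : Finset (Fin 3),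
    (∀ k ∈ K, ∀ l ∈ L, i' ≠ k ∧ i' ≠ l) →
    (∀ k ∈ K, ∀ l ∈ L, k = i ∨ l = i) →
    ((K ×ˢ L).card ≤ 2 ∧ (¬(i ∈ K ∧ i ∈ L) → (K ×ˢ L).card ≤ 1)) := by decide


def φ₀ : MFormula 3 := .or (.and (.var 0) (.var 1)) (.and (.or (.var 0) (.var 1)) (.var 2))

theorem maj3_rectangle_bound_and_formula_size :
    (∀ (m : ℕ) (R : Fin m → Set ((Fin 3 → Bool) × (Fin 3 → Bool))),
      (∀ j, ∃ A B, R j = A ×ˢ B) →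
      (∀ j, ∃ i : Fin 3, ∀ p ∈ R j, i ∈ cell p.1 p.2) →
      (Pairwise fun j j' => Disjoint (R j) (R j')) →
      (⋃ j, R j) = {p | IsMinterm MAJ3v p.1 ∧ IsMaxterm MAJ3v p.2} →
      5 ≤ m) ∧
    (∃ φ : MFormula 3, φ.size = 5 ∧ ∀ x, φ.eval x = MAJ3v x) ∧
    (∀ φ : MFormula 3, (∀ x, φ.eval x = MAJ3v x) → 5 ≤ φ.size) := by
  refine ⟨?_, ⟨φ₀, rfl, by decide⟩, ?_⟩
  ·
      intro m R hrect hcolor hdisj hcover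
      by_contra hm5
      push_neg at hm5
      have hm4 : m ≤ 4 := by omega
      classical
      have hpair : ∀ k l : Fin 3, ∃ j, (mnt k, mxt l) ∈ R j := by
        intro k l
        have h : (mnt k, mxt l) ∈ {p : (Fin 3 → Bool) × (Fin 3 → Bool) |
            IsMinterm MAJ3v p.1 ∧ IsMaxterm MAJ3v p.2} := ⟨minterm_mnt k, maxterm_mxt l⟩
        rw [← hcover] at h
        exact Set.mem_iUnion.1 h
      have huniq : ∀ (p : (Fin 3 → Bool) × (Fin 3 → Bool)) (j j' : Fin m),
          p ∈ R j → p ∈ R j' → j = j' := by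
        intro p j j' h h'
        by_contra hne
        exact Set.disjoint_left.1 (hdisj hne) h h'
      set K : Fin m → Finset (Fin 3) :=
        fun j => Finset.univ.filter (fun k => ∃ l, (mnt k, mxt l) ∈ R j) with hK
      set L : Fin m → Finset (Fin 3) :=
        fun j => Finset.univ.filter (fun l => ∃ k, (mnt k, mxt l) ∈ R j) with hL
      have hKL : ∀ j k l, (mnt k, mxt l) ∈ R j ↔ (k ∈ K j ∧ l ∈ L j) := by
        intro j k l
        constructor
        · intro h
          exact ⟨Finset.mem_filter.2 ⟨Finset.mem_univ _, ⟨l, h⟩⟩,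
                 Finset.mem_filter.2 ⟨Finset.mem_univ _, ⟨k, h⟩⟩⟩
        · rintro ⟨hk, hl⟩
          obtain ⟨l', hl'⟩ := (Finset.mem_filter.1 hk).2
          obtain ⟨k', hk'⟩ := (Finset.mem_filter.1 hl).2
          obtain ⟨A, B, hAB⟩ := hrect j
          rw [hAB] at hl' hk' ⊢
          exact ⟨hl'.1, hk'.2⟩
      -- color property in index space
      have hcol : ∀ j, ∃ i : Fin 3, ∀ k ∈ K j, ∀ l ∈ L j, i ≠ k ∧ i ≠ l := by
        intro j
        obtain ⟨i, hi⟩ := hcolor j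
        exact ⟨i, fun k hk l hl => (cell_mem i k l).1 (hi _ ((hKL j k l).2 ⟨hk, hl⟩))⟩
      -- the assignment of cells to rectangles
      have t : ∀ c : Fin 3 × Fin 3, ∃ j, (mnt c.1, mxt c.2) ∈ R j := fun c => hpair c.1 c.2
      set f : Fin 3 × Fin 3 → Fin m := fun c => (t c).choose with hf
      have hft : ∀ c, (mnt c.1, mxt c.2) ∈ R (f c) := fun c => (t c).choose_spec
      have hfib : ∀ j, Finset.univ.filter (fun c => f c = j) = K j ×ˢ L j := by
        intro j
        ext c
        simp only [Finset.mem_filter, Finset.mem_univ, true_and, Finset.mem_product]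
        constructor
        · rintro rfl
          exact (hKL _ c.1 c.2).1 (hft c)
        · intro h
          exact huniq _ _ _ (hft c) ((hKL j c.1 c.2).2 h)
      have h9 : ∑ j : Fin m, (K j ×ˢ L j).card = 9 := by
        have h := Finset.card_eq_sum_card_fiberwise
          (f := f) (s := (Finset.univ : Finset (Fin 3 × Fin 3))) (t := Finset.univ)
          (fun x _ => Finset.mem_univ _)
        simp only [hfib, Finset.card_univ] at h
        have h1 : (Fintype.card (Fin 3 × Fin 3)) = 9 := by simp
        rw [h1] at h
        exact h.symm
      -- pigeonhole: some rectangle has ≥ 3 cells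
      have hbig : ∃ j, 3 ≤ (K j ×ˢ L j).card := by
        by_contra hall
        push_neg at hall
        have : ∑ j : Fin m, (K j ×ˢ L j).card ≤ ∑ _j : Fin m, 2 :=
          Finset.sum_le_sum (fun j _ => by have := hall j; omega)
        simp only [Finset.sum_const, Finset.card_univ, Fintype.card_fin, smul_eq_mul] at this
        omega
      obtain ⟨j, hj3⟩ := hbig
      obtain ⟨i, hi⟩ := hcol j
      have hne : (K j ×ˢ L j).Nonempty := Finset.card_pos.1 (by omega)
      obtain ⟨c0, hc0⟩ := hne
      have hc0' := Finset.mem_product.1 hc0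
      have hKsub : K j ⊆ Finset.univ.erase i :=
        fun k hk => Finset.mem_erase.2 ⟨(hi k hk _ hc0'.2).1.symm, Finset.mem_univ _⟩
      have hLsub : L j ⊆ Finset.univ.erase i :=
        fun l hl => Finset.mem_erase.2 ⟨(hi _ hc0'.1 l hl).2.symm, Finset.mem_univ _⟩
      have hcard2 : (Finset.univ.erase i).card = 2 := by
        rw [Finset.card_erase_of_mem (Finset.mem_univ _)]
        simp
      have hKc : (K j).card ≤ 2 := hcard2 ▸ Finset.card_le_card hKsub
      have hLc : (L j).card ≤ 2 := hcard2 ▸ Finset.card_le_card hLsub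
      rw [Finset.card_product] at hj3
      have hKc2 : (K j).card = 2 ∧ (L j).card = 2 := by
        constructor <;> nlinarith
      have hKeq : K j = Finset.univ.erase i :=
        Finset.eq_of_subset_of_card_le hKsub (by omega)
      have hLeq : L j = Finset.univ.erase i :=
        Finset.eq_of_subset_of_card_le hLsub (by omega)
      -- the rectangle containing the diagonal cell (i, i)
      set j0 : Fin m := f (i, i) with hj0
      have hj0mem : (mnt i, mxt i) ∈ R j0 := hft (i, i)
      have hj0ne : j0 ≠ j := by
        intro h
        have : i ∈ K j := ((hKL j i i).1 (h ▸ hj0mem)).1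
        rw [hKeq] at this
        exact (Finset.mem_erase.1 this).1 rfl
      -- every other rectangle has at most 2 cells, and at most 1 if it misses (i,i)
      have hsmall : ∀ j' : Fin m, j' ≠ j →
          (K j' ×ˢ L j').card ≤ 2 ∧ (j' ≠ j0 → (K j' ×ˢ L j').card ≤ 1) := by
        intro j' hj'
        obtain ⟨i', hi'⟩ := hcol j'
        have hrem : ∀ k ∈ K j', ∀ l ∈ L j', k = i ∨ l = i := by
          intro k hk l hl
          by_contra hcon
          push_neg at hcon
          have hkK : k ∈ K j := hKeq ▸ Finset.mem_erase.2 ⟨hcon.1, Finset.mem_univ _⟩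
          have hlL : l ∈ L j := hLeq ▸ Finset.mem_erase.2 ⟨hcon.2, Finset.mem_univ _⟩
          exact hj' (huniq _ _ _ ((hKL j' k l).2 ⟨hk, hl⟩) ((hKL j k l).2 ⟨hkK, hlL⟩))
        have hmain := rect_small i i' (K j') (L j') hi' hrem
        refine ⟨hmain.1, fun hne0 => hmain.2 ?_⟩
        rintro ⟨hiK, hiL⟩
        exact hne0 (huniq _ _ _ ((hKL j' i i).2 ⟨hiK, hiL⟩) hj0mem)
      -- final counting
      have hsplit : ∑ j' : Fin m, (K j' ×ˢ L j').card
          = (K j ×ˢ L j).card + ∑ j' ∈ Finset.univ.erase j, (K j' ×ˢ L j').card :=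
        (Finset.add_sum_erase _ _ (Finset.mem_univ j)).symm
      have hsplit2 : ∑ j' ∈ Finset.univ.erase j, (K j' ×ˢ L j').card
          = (K j0 ×ˢ L j0).card + ∑ j' ∈ (Finset.univ.erase j).erase j0, (K j' ×ˢ L j').card :=
        (Finset.add_sum_erase _ _ (Finset.mem_erase.2 ⟨hj0ne, Finset.mem_univ _⟩)).symm
      have hPj : (K j ×ˢ L j).card = 4 := by
        rw [Finset.card_product, hKc2.1, hKc2.2]
      have hj0le : (K j0 ×ˢ L j0).card ≤ 2 := (hsmall j0 hj0ne).1
      have hrest : ∑ j' ∈ (Finset.univ.erase j).erase j0, (K j' ×ˢ L j').card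
          ≤ ((Finset.univ.erase j).erase j0).card * 1 := by
        rw [← smul_eq_mul]
        apply Finset.sum_le_card_nsmul
        intro j' hj'
        have h1 := Finset.mem_erase.1 hj'
        have h2 := Finset.mem_erase.1 h1.2
        exact (hsmall j' h2.1).2 h1.1
      have hcarderase : ((Finset.univ.erase j).erase j0).card ≤ 2 := by
        have e1 : (Finset.univ.erase j).card = m - 1 := by
          rw [Finset.card_erase_of_mem (Finset.mem_univ _)]
          simp
        have e2 : ((Finset.univ.erase j).erase j0).card = m - 1 - 1 := by
          rw [Finset.card_erase_of_mem (Finset.mem_erase.2 ⟨hj0ne, Finset.mem_univ _⟩), e1]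
        omega
      omega
  ·
      intro φ h
      by_contra hlt
      have h4 : φ.size ≤ 4 := by omega
      set_option maxRecDepth 40000 in
      have hm := RR_le ⟨φ.size, by omega⟩ (by simpa using mem_RR φ h4)
      have he : enc (fun x => φ.eval x) = enc MAJ3v := congrArg enc (funext h)
      rw [he] at hm
      exact maj_not_R4 hm
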